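/- Let R be a commutative ring, let H_A : Matrix a₀ a₁ R, H_B : Matrix b₀ b₁ R, H_C : Matrix c₀ c₁ R be matrices over finite index types, and fix q : c₀. Let e_q denote the column vector in R^{c₀} with a 1 in position q and 0 elsewhere. Define ∂₂^{AB} = [I_{a₁}⊗H_B ; H_A⊗I_{b₁}], the 3×3 block matrix ∂₂^{ABC} = [[I_{a₁}⊗H_B⊗I_{c₀}, I_{a₁}⊗I_{b₀}⊗H_C, 0],[H_A⊗I_{b₁}⊗I_{c₀}, 0, I_{a₀}⊗I_{b₁}⊗H_C],[0, H_A⊗I_{b₀}⊗I_{c₁}, I_{a₀}⊗H_B⊗I_{c₁}]], γ₁ the block matrix with (1,1) block I_{a₁×b₀}⊗e_q, (2,2) block I_{a₀×b₁}⊗e_q, and all other blocks zero (row index (a₁×b₀×c₀) ⊕ (a₀×b₁×c₀) ⊕ (a₀×b₀×c₁), column index (a₁×b₀) ⊕ (a₀×b₁)), and γ₂ the block column matrix [I_{a₁×b₁}⊗e_q ; 0 ; 0] (row index (a₁×b₁×c₀) ⊕ (a₁×b₀×c₁) ⊕ (a₀×b₁×c₁), column index a₁×b₁). Then ∂₂^{ABC}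 * γ₂ = γ₁ * ∂₂^{AB}. -/

import Mathlib

/-! Block by block, both sides reduce to the identity
`(P ⊗ Q ⊗ I) (I ⊗ e) = P ⊗ Q ⊗ e = (I ⊗ e) (P ⊗ Q)`: tensoring with the column `e_q` commutes
with Kronecker products, here for `(P, Q) = (I, H_B)` and `(H_A, I)`. -/

open Matrix Kronecker

namespace Matrix

variable {R : Type*} [CommSemiring R]

theorem reindex_prodUnique_kronecker_one {m n ι : Type*} [Unique ι] [DecidableEq ι]
    (M : Matrix m n R) :
    reindex (Equiv.prodUnique m ι) (Equiv.prodUnique n ι) (M ⊗ₖ (1 : Matrix ι ι R)) = M := by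
  ext i j
  simp

theorem kronecker_kronecker_one_mul_reindex_one_kronecker
    {α₀ α₁ β₀ β₁ γ ι : Type*} [Fintype α₀] [Fintype α₁] [Fintype β₀] [Fintype β₁] [Fintype γ]
    [Unique ι] [DecidableEq α₀] [DecidableEq α₁] [DecidableEq β₀] [DecidableEq β₁]
    [DecidableEq γ] [DecidableEq ι]
    (P : Matrix α₀ α₁ R) (Q : Matrix β₀ β₁ R) (v : Matrix γ ι R) :
    P ⊗ₖ (Q ⊗ₖ (1 : Matrix γ γ R)) *
        reindex (Equiv.prodAssoc α₁ β₁ γ) (Equiv.prodUnique (α₁ × β₁) ι)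
          ((1 : Matrix (α₁ × β₁) (α₁ × β₁) R) ⊗ₖ v) =
      reindex (Equiv.prodAssoc α₀ β₀ γ) (Equiv.prodUnique (α₀ × β₀) ι)
          ((1 : Matrix (α₀ × β₀) (α₀ × β₀) R) ⊗ₖ v) * (P ⊗ₖ Q) :=
  calc _ = reindex (Equiv.prodAssoc α₀ β₀ γ) (Equiv.prodUnique (α₁ × β₁) ι)
          (P ⊗ₖ Q ⊗ₖ (1 : Matrix γ γ R) * (1 : Matrix (α₁ × β₁) (α₁ × β₁) R) ⊗ₖ v) := by
        rw [← kronecker_assoc]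
        simp only [reindex_apply, submatrix_mul_equiv]
    _ = reindex (Equiv.prodAssoc α₀ β₀ γ) (Equiv.prodUnique (α₁ × β₁) ι)
          ((1 : Matrix (α₀ × β₀) (α₀ × β₀) R) ⊗ₖ v * P ⊗ₖ Q ⊗ₖ (1 : Matrix ι ι R)) := by
        rw [← mul_kronecker_mul, ← mul_kronecker_mul, Matrix.mul_one, Matrix.one_mul,
          Matrix.mul_one, Matrix.one_mul]
    _ = reindex (Equiv.prodAssoc α₀ β₀ γ) (Equiv.prodUnique (α₀ × β₀) ι)
          ((1 : Matrix (α₀ × β₀) (α₀ × β₀) R) ⊗ₖ v) *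
        reindex (Equiv.prodUnique (α₀ × β₀) ι) (Equiv.prodUnique (α₁ × β₁) ι)
          (P ⊗ₖ Q ⊗ₖ (1 : Matrix ι ι R)) := by
        simp only [reindex_apply, submatrix_mul_equiv]
    _ = _ := by rw [reindex_prodUnique_kronecker_one]

end Matrix

/-- Degree-1/degree-2 chain map identity for the inclusion of a 2D lifted product code
into the 3D lifted product code: `∂₂^{ABC} * γ₂ = γ₁ * ∂₂^{AB}`, where `γ₂` is the block
column matrix `[I_{a₁×b₁}⊗e_q ; 0 ; 0]` and `γ₁` has diagonal blocks `I_{a₁×b₀}⊗e_q`,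
`I_{a₀×b₁}⊗e_q` and zero elsewhere. -/
theorem inclusion_chain_map_degree_two {R : Type*} [CommRing R]
    {a₀ a₁ b₀ b₁ c₀ c₁ : Type*}
    [Fintype a₀] [Fintype a₁] [Fintype b₀] [Fintype b₁] [Fintype c₀] [Fintype c₁]
    [DecidableEq a₀] [DecidableEq a₁] [DecidableEq b₀] [DecidableEq b₁]
    [DecidableEq c₀] [DecidableEq c₁]
    (HA : Matrix a₀ a₁ R) (HB : Matrix b₀ b₁ R) (HC : Matrix c₀ c₁ R) (q : c₀) :
    -- e_q : the standard basis column vector at position q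
    let e : Matrix c₀ Unit R := Matrix.of fun k _ => if k = q then 1 else 0
    -- γ₁: (1,1) block I_{a₁×b₀}⊗e_q, (2,2) block I_{a₀×b₁}⊗e_q, rest zero
    let γ₁ : Matrix ((a₁ × b₀ × c₀) ⊕ (a₀ × b₁ × c₀) ⊕ (a₀ × b₀ × c₁))
        ((a₁ × b₀) ⊕ (a₀ × b₁)) R :=
      fromBlocks
        (Matrix.reindex (Equiv.prodAssoc a₁ b₀ c₀) (Equiv.prodUnique (a₁ × b₀) Unit)
          ((1 : Matrix (a₁ × b₀) (a₁ × b₀) R) ⊗ₖ e))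
        0 0
        (fromRows
          (Matrix.reindex (Equiv.prodAssoc a₀ b₁ c₀) (Equiv.prodUnique (a₀ × b₁) Unit)
            ((1 : Matrix (a₀ × b₁) (a₀ × b₁) R) ⊗ₖ e))
          0)
    -- γ₂ = [I_{a₁×b₁}⊗e_q ; 0 ; 0]
    let γ₂ : Matrix ((a₁ × b₁ × c₀) ⊕ (a₁ × b₀ × c₁) ⊕ (a₀ × b₁ × c₁)) (a₁ × b₁) R :=
      fromRows
        (Matrix.reindex (Equiv.prodAssoc a₁ b₁ c₀) (Equiv.prodUnique (a₁ × b₁) Unit)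
          ((1 : Matrix (a₁ × b₁) (a₁ × b₁) R) ⊗ₖ e))
        0
    -- ∂₂^{ABC} * γ₂ = γ₁ * ∂₂^{AB}
    (fromBlocks
      ((1 : Matrix a₁ a₁ R) ⊗ₖ (HB ⊗ₖ (1 : Matrix c₀ c₀ R)))
      (fromCols ((1 : Matrix a₁ a₁ R) ⊗ₖ ((1 : Matrix b₀ b₀ R) ⊗ₖ HC)) 0)
      (fromRows (HA ⊗ₖ ((1 : Matrix b₁ b₁ R) ⊗ₖ (1 : Matrix c₀ c₀ R))) 0)
      (fromBlocks
        0 ((1 : Matrix a₀ a₀ R) ⊗ₖ ((1 : Matrix b₁ b₁ R) ⊗ₖ HC))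
        (HA ⊗ₖ ((1 : Matrix b₀ b₀ R) ⊗ₖ (1 : Matrix c₁ c₁ R)))
        ((1 : Matrix a₀ a₀ R) ⊗ₖ (HB ⊗ₖ (1 : Matrix c₁ c₁ R))))) * γ₂
    = γ₁ * fromRows ((1 : Matrix a₁ a₁ R) ⊗ₖ HB) (HA ⊗ₖ (1 : Matrix b₁ b₁ R)) := by
  intro e γ₁ γ₂
  simp only [γ₁, γ₂, fromBlocks_mul_fromRows, fromRows_mul, Matrix.mul_zero, Matrix.zero_mul,
    add_zero, zero_add, kronecker_kronecker_one_mul_reindex_one_kronecker]
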